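/- Let C be an M×N complementary set (rows unimodular sequences with Σ_ν Λ(c_ν)(τ) = 0 for all τ ≠ 0) and b a unimodular sequence of length P. Then Z, the M×NP matrix whose rows are c_ν⊗b, is a type-II ZCS with ZCZ width NP-P+1: Σ_ν Λ(c_ν⊗b)(τ) = 0 for all P-1 < |τ| < NP. -/

import Mathlib

open Finset

/-- Aperiodic cross-correlation of length-`L` sequences `x, y` at integer shift `τ`. -/
noncomputable def acc (L : ℕ) (x y : ℕ → ℂ) (τ : ℤ) : ℂ :=
  if 0 ≤ τ ∧ τ < (L : ℤ) then
    ∑ i ∈ Finset.range (L - τ.toNat), x (i + τ.toNat) * (starRingEnd ℂ) (y i)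
  else if -(L : ℤ) < τ ∧ τ < 0 then
    ∑ i ∈ Finset.range (L - (-τ).toNat), x i * (starRingEnd ℂ) (y (i + (-τ).toNat))
  else 0

/-- Aperiodic autocorrelation. -/
noncomputable def aac (L : ℕ) (x : ℕ → ℂ) (τ : ℤ) : ℂ := acc L x x τ

/-- Kronecker product of a sequence with a length-`P` sequence: `(a ⊗ b)_(nP+p) = a_n b_p`. -/
noncomputable def kron (P : ℕ) (a b : ℕ → ℂ) : ℕ → ℂ := fun n => a (n / P) * b (n % P)

/-- Aperiodic cross-correlation sum of two codes (row-wise sum). -/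
noncomputable def ccs {M : ℕ} (L : ℕ) (A B : Fin M → ℕ → ℂ) (τ : ℤ) : ℂ :=
  ∑ ν, acc L (A ν) (B ν) τ

lemma kron_apply (P : ℕ) (a b : ℕ → ℂ) (j p : ℕ) (hP : 0 < P) (hp : p < P) :
    kron P a b (j * P + p) = a j * b p := by
  unfold kron
  rw [mul_comm j P, Nat.mul_add_div hP, Nat.mul_add_mod, Nat.div_eq_of_lt hp,
    Nat.mod_eq_of_lt hp, add_zero]

lemma sum_range_mul' (f : ℕ → ℂ) (m P : ℕ) :
    ∑ i ∈ range (m * P), f i = ∑ j ∈ range m, ∑ p ∈ range P, f (j * P + p) := by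
  induction m with
  | zero => simp
  | succ m ih => rw [Nat.succ_mul, Finset.sum_range_add, ih, Finset.sum_range_succ]

lemma sum_range_split (g : ℕ → ℂ) (P r : ℕ) (hr : r ≤ P) :
    ∑ p ∈ range P, g p = ∑ p ∈ range (P - r), g p + ∑ p ∈ range r, g ((P - r) + p) := by
  have h : P - r + r = P := by omega
  rw [← Finset.sum_range_add, h]

lemma key (N P q r : ℕ) (hP : 0 < P) (hqN : q < N) (hr : r < P) (a b : ℕ → ℂ) :
    ∑ i ∈ range (N * P - (q * P + r)),
        kron P a b (i + (q * P + r)) * (starRingEnd ℂ) (kron P a b i)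
      = (∑ p ∈ range (P - r), b (p + r) * (starRingEnd ℂ) (b p)) *
          (∑ j ∈ range (N - q), a (j + q) * (starRingEnd ℂ) (a j))
        + (∑ p ∈ range r, b p * (starRingEnd ℂ) (b (P - r + p))) *
          (∑ j ∈ range (N - q - 1), a (j + q + 1) * (starRingEnd ℂ) (a j)) := by
  obtain ⟨m, hm⟩ : ∃ m, N - q = m + 1 := ⟨N - q - 1, by omega⟩
  have hm' : N - q - 1 = m := by omega
  have hNP : N * P = (m + 1) * P + q * P := by
    rw [← Nat.add_mul]; congr 1; omega
  have hL : N * P - (q * P + r) = m * P + (P - r) := by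
    have h1 : (m + 1) * P = m * P + P := by ring
    omega
  have hsplitP : P = (P - r) + r := by omega
  have h1 : ∀ j p : ℕ, p < P - r →
      kron P a b (j * P + p + (q * P + r)) * (starRingEnd ℂ) (kron P a b (j * P + p))
        = (b (p + r) * (starRingEnd ℂ) (b p)) * (a (j + q) * (starRingEnd ℂ) (a j)) := by
    intro j p hp
    have e : j * P + p + (q * P + r) = (j + q) * P + (p + r) := by ring
    rw [e, kron_apply P a b (j + q) (p + r) hP (by omega),
      kron_apply P a b j p hP (by omega), map_mul]
    ring
  have h2 : ∀ j p : ℕ, p < r →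
      kron P a b (j * P + ((P - r) + p) + (q * P + r)) *
          (starRingEnd ℂ) (kron P a b (j * P + ((P - r) + p)))
        = (b p * (starRingEnd ℂ) (b ((P - r) + p))) * (a (j + q + 1) * (starRingEnd ℂ) (a j)) := by
    intro j p hp
    have hPr : P - r + r = P := by omega
    have e : j * P + ((P - r) + p) + (q * P + r) = (j + q + 1) * P + p := by
      calc j * P + ((P - r) + p) + (q * P + r)
          = j * P + q * P + ((P - r) + r) + p := by ring
        _ = j * P + q * P + P + p := by rw [hPr]
        _ = (j + q + 1) * P + p := by ring
    rw [e, kron_apply P a b (j + q + 1) p hP (by omega),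
      kron_apply P a b j ((P - r) + p) hP (by omega), map_mul]
    ring
  rw [hL, Finset.sum_range_add, sum_range_mul']
  have inner : ∀ j : ℕ,
      (∑ p ∈ range P, kron P a b (j * P + p + (q * P + r)) *
          (starRingEnd ℂ) (kron P a b (j * P + p)))
        = (∑ p ∈ range (P - r), b (p + r) * (starRingEnd ℂ) (b p)) * (a (j + q) * (starRingEnd ℂ) (a j))
          + (∑ p ∈ range r, b p * (starRingEnd ℂ) (b ((P - r) + p))) * (a (j + q + 1) * (starRingEnd ℂ) (a j)) := by
    intro j
    rw [sum_range_split _ P r hr.le]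
    rw [Finset.sum_congr rfl (fun p hp => h1 j p (mem_range.mp hp)),
      Finset.sum_congr rfl (fun p hp => h2 j p (mem_range.mp hp)),
      ← Finset.sum_mul, ← Finset.sum_mul]
  rw [Finset.sum_congr rfl (fun j _ => inner j),
    Finset.sum_congr rfl (fun p hp => h1 m p (mem_range.mp hp))]
  rw [Finset.sum_add_distrib, ← Finset.mul_sum, ← Finset.mul_sum, ← Finset.sum_mul,
    hm', hm]
  simp only [Nat.add_sub_cancel, Finset.sum_range_succ]
  ring

lemma acc_neg (L : ℕ) (x : ℕ → ℂ) (t : ℤ) (h0 : 0 < t) (hL : t < (L : ℤ)) :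
    acc L x x (-t) = (starRingEnd ℂ) (acc L x x t) := by
  unfold acc
  rw [if_neg (by omega), if_pos ⟨by omega, by omega⟩, if_pos ⟨h0.le, hL⟩, map_sum]
  refine Finset.sum_congr (by rw [neg_neg]) fun i _ => ?_
  rw [neg_neg, map_mul, Complex.conj_conj]
  ring

theorem stmt5 (M N P : ℕ) (c : Fin M → ℕ → ℂ)
    (hU : ∀ ν, ∀ i < N, ‖c ν i‖ = 1)
    (hCS : ∀ τ : ℤ, τ ≠ 0 → ∑ ν, aac N (c ν) τ = 0)
    (b : ℕ → ℂ) (hb : ∀ p < P, ‖b p‖ = 1) :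
    ∀ τ : ℤ, (P : ℤ) - 1 < |τ| → |τ| < (N : ℤ) * P →
      ∑ ν, aac (N * P) (kron P (c ν) b) τ = 0 := by
  have hpos : ∀ t : ℤ, (P : ℤ) - 1 < t → t < (N : ℤ) * P →
      ∑ ν, aac (N * P) (kron P (c ν) b) t = 0 := by
    intro t h1 h2
    have hP : 0 < P := by
      rcases Nat.eq_zero_or_pos P with h | h
      · subst h; simp at h1 h2; omega
      · exact h
    have ht0 : (P : ℤ) ≤ t := by omega
    set n := t.toNat with hn
    have htn : t = (n : ℤ) := (Int.toNat_of_nonneg (by omega)).symm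
    have hPn : P ≤ n := by omega
    have hnNP : n < N * P := by
      have : (n : ℤ) < (N : ℤ) * P := htn ▸ h2
      exact_mod_cast this
    set q := n / P with hqdef
    set r := n % P with hrdef
    have hnqr : q * P + r = n := by rw [hqdef, hrdef, mul_comm]; exact Nat.div_add_mod n P
    have hrP : r < P := Nat.mod_lt _ hP
    have hq1 : 1 ≤ q := (Nat.one_le_div_iff hP).mpr hPn
    have hqN : q < N := (Nat.div_lt_iff_lt_mul hP).mpr hnNP
    have expand : ∀ ν, aac (N * P) (kron P (c ν) b) t =
        ∑ i ∈ range (N * P - (q * P + r)),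
          kron P (c ν) b (i + (q * P + r)) * (starRingEnd ℂ) (kron P (c ν) b i) := by
      intro ν
      unfold aac acc
      rw [if_pos ⟨by omega, by rw [htn]; exact_mod_cast hnNP⟩]
      rw [← hn, hnqr]
    rw [Finset.sum_congr rfl (fun ν _ => by rw [expand ν, key N P q r hP hqN hrP])]
    rw [Finset.sum_add_distrib, ← Finset.mul_sum, ← Finset.mul_sum]
    have hA1 : ∑ ν, ∑ j ∈ range (N - q), c ν (j + q) * (starRingEnd ℂ) (c ν j) = 0 := by
      have h := hCS (q : ℤ) (by exact_mod_cast Nat.one_le_iff_ne_zero.mp hq1)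
      rw [← h]
      refine Finset.sum_congr rfl fun ν _ => ?_
      unfold aac acc
      rw [if_pos ⟨by positivity, by exact_mod_cast hqN⟩, Int.toNat_natCast]
    have hA2 : ∑ ν, ∑ j ∈ range (N - q - 1), c ν (j + q + 1) * (starRingEnd ℂ) (c ν j) = 0 := by
      rcases lt_or_ge (q + 1) N with hq2 | hq2
      · have h := hCS ((q : ℤ) + 1) (by omega)
        rw [← h]
        refine Finset.sum_congr rfl fun ν _ => ?_
        unfold aac acc
        rw [if_pos ⟨by positivity, by exact_mod_cast hq2⟩]
        have : ((q : ℤ) + 1).toNat = q + 1 := by omega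
        rw [this]
        have : N - (q + 1) = N - q - 1 := by omega
        rw [this]
        exact Finset.sum_congr rfl fun j _ => by rw [add_assoc]
      · have : N - q - 1 = 0 := by omega
        simp [this]
    rw [hA1, hA2, mul_zero, mul_zero, add_zero]
  intro τ h1 h2
  rcases abs_cases τ with ⟨he, _⟩ | ⟨he, hlt⟩
  · exact hpos τ (he ▸ h1) (he ▸ h2)
  · rw [he] at h1 h2
    have h0 : 0 < -τ := by
      rcases eq_or_lt_of_le (le_of_eq rfl : τ ≤ τ) with _ | _
      · omega
      · omega
    have hLT : -τ < ((N * P : ℕ) : ℤ) := by push_cast; omega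
    have hz := hpos (-τ) h1 h2
    calc ∑ ν, aac (N * P) (kron P (c ν) b) τ
        = (starRingEnd ℂ) (∑ ν, aac (N * P) (kron P (c ν) b) (-τ)) := by
          rw [map_sum]
          refine Finset.sum_congr rfl fun ν _ => ?_
          unfold aac
          rw [show τ = -(-τ) by ring, acc_neg (N * P) (kron P (c ν) b) (-τ) h0 hLT, neg_neg]
      _ = 0 := by rw [hz, map_zero]
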